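/- Hamming-to-Ulam construction: suppose n/r is even, d ≤ r, P = [n/2], Q = [n] \ P; let C'_1 be a code of permutations of P with minimum r-regular Ulam distance ≥ d, and C_1 a code of permutations of Q with minimum r-regular Hamming distance ≥ d. Then the block-interleaved code C = C'_1 ∘_r C_1 (blocks of r elements alternating between the two codes, closed under ≡_r) has minimum r-regular Ulam distance at least d. -/

import Mathlib

/-- The `r`-regular multipermutation associated with a permutation `π` of `Fin n`:
`mp n r π j` is the (0-indexed) rank block of element `j`, i.e. `⌊π⁻¹(j)/r⌋`. -/
def mp (n r : ℕ) (π : Equiv.Perm (Fin n)) (j : Fin n) : ℕ := (π.symm j : ℕ) / r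

/-- The `i`-th part of the ordered set partition associated with `π`:
the set of elements of rank block `i`. -/
def part (n r : ℕ) (π : Equiv.Perm (Fin n)) (i : ℕ) : Finset (Fin n) :=
  Finset.univ.filter fun j => mp n r π j = i

/-- The `r`-regular Hamming distance between permutations. -/
def hammR (n r : ℕ) (π σ : Equiv.Perm (Fin n)) : ℕ :=
  (Finset.univ.filter fun j => mp n r π j ≠ mp n r σ j).card

/-- Length of a longest common subsequence of two lists. -/
noncomputable def lcsLen {α : Type*} (A B : List α) : ℕ :=
  sSup {k | ∃ l : List α, l.length = k ∧ l.Sublist A ∧ l.Sublist B}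

/-- Ulam distance between two lists of the same length (length minus LCS length). -/
noncomputable def ulamList {α : Type*} (A B : List α) : ℕ := A.length - lcsLen A B

/-- The Ulam distance between two permutations of `Fin n`. -/
noncomputable def ulam (n : ℕ) (π σ : Equiv.Perm (Fin n)) : ℕ :=
  n - lcsLen (List.ofFn π) (List.ofFn σ)

/-- The `r`-regular Ulam distance: minimum Ulam distance between members of the
`≡_r`-equivalence classes of `π` and `σ`. -/
noncomputable def ulamR (n r : ℕ) (π σ : Equiv.Perm (Fin n)) : ℕ :=
  sInf {k | ∃ π' σ' : Equiv.Perm (Fin n),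
    mp n r π' = mp n r π ∧ mp n r σ' = mp n r σ ∧ k = ulam n π' σ'}

/-- The block-interleaved code `C'₁ ∘_r C₁`: blocks of `r` consecutive ranks
alternate between a codeword `π'` of the code `C'` over `P = [n/2]` (even rank
blocks) and a codeword `π₁` of the code `C1` over `Q = [n] \ P` (odd rank blocks);
the code is closed under `≡_r`.  An element `v` of `P` (embedded as `v`) has rank
block `2·m^r_{π'}(v)` and an element of `Q` (embedded as `v + n/2`) has rank block
`2·m^r_{π₁}(v) + 1`. -/
def blockCode (n r : ℕ) (h2 : n / 2 + n / 2 = n)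
    (C' C1 : Set (Equiv.Perm (Fin (n / 2)))) : Set (Equiv.Perm (Fin n)) :=
  {π | ∃ π' ∈ C', ∃ π₁ ∈ C1,
    (∀ v : Fin (n / 2),
      mp n r π ⟨(v : ℕ), by have := v.isLt; omega⟩ = 2 * mp (n / 2) r π' v) ∧
    (∀ v : Fin (n / 2),
      mp n r π ⟨(v : ℕ) + n / 2, by have := v.isLt; omega⟩ = 2 * mp (n / 2) r π₁ v + 1)}

/-!
Membership in the code depends only on the `≡_r`-class, so it suffices to bound the length of a
common subsequence `l` of two codewords `π` and `σ`; in both, the first half fills the even rank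
blocks and the second half the odd ones.

If the first-half components are inequivalent, renumbering the positions of the even blocks
consecutively turns the first-half elements of `l` into a common subsequence of two
representatives of those components, so `l` misses at least `d` first-half elements.

If they are equivalent, `π` and `σ` have the same even blocks, and an element in different odd
blocks of `π` and `σ` cannot occur in `l` together with an element of the even block between
them. Hence `l` misses either a whole block (`r ≥ d` elements) or every element displaced by the
second-half components, of which there are at least `d`.
-/

open List

section LongestCommonSubsequence

variable {α : Type*} {A B l : List α}

theorem lcsLen_le {k : ℕ} (h : ∀ l : List α, l <+ A → l <+ B → l.length ≤ k) :
    lcsLen A B ≤ k :=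
  csSup_le' fun _ ⟨l, hl, hA, hB⟩ => hl ▸ h l hA hB

theorem length_le_lcsLen (hA : l <+ A) (hB : l <+ B) : l.length ≤ lcsLen A B :=
  le_csSup ⟨A.length, fun _ ⟨_, hk, hA', _⟩ => hk ▸ hA'.length_le⟩ ⟨l, rfl, hA, hB⟩

end LongestCommonSubsequence

section PermSublist

variable {n : ℕ} {π σ : Equiv.Perm (Fin n)} {l : List (Fin n)}

theorem sublist_ofFn_iff_pairwise :
    l <+ ofFn π ↔ l.Pairwise fun x y => π.symm x < π.symm y := by
  constructor
  · intro h
    exact (pairwise_ofFn.mpr fun i j hij => by simpa using hij).sublist h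
  · intro h
    have hsorted : (l.map π.symm).Pairwise (· < ·) := pairwise_map.mpr h
    have hsub : l.map π.symm <+ finRange n :=
      sublist_of_subperm_of_pairwise
        (subperm_of_subset hsorted.nodup fun x _ => mem_finRange x) hsorted
        (pairwise_lt_finRange n)
    simpa [map_map, ofFn_eq_map] using hsub.map π

theorem symm_lt_symm_of_mem_of_sublist (hπ : l <+ ofFn π) (hσ : l <+ ofFn σ) {x y : Fin n}
    (hx : x ∈ l) (hy : y ∈ l) (h : π.symm x < π.symm y) : σ.symm x < σ.symm y := by
  let R a b := π.symm a < π.symm b ∧ σ.symm a < σ.symm b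
  have : Std.Symm fun a b => R a b ∨ R b a := ⟨fun _ _ => Or.symm⟩
  have hl : l.Pairwise fun a b => R a b ∨ R b a :=
    ((sublist_ofFn_iff_pairwise.mp hπ).and (sublist_ofFn_iff_pairwise.mp hσ)).imp Or.inl
  rcases hl.forall hx hy (by rintro rfl; exact lt_irrefl _ h) with hxy | hyx
  · exact hxy.2
  · exact absurd hyx.1 (lt_asymm h)

theorem length_add_card_le (hl : l.Nodup) {s : Finset (Fin n)} (hs : ∀ x ∈ s, x ∉ l) :
    l.length + s.card ≤ n := by
  classical
  rw [← toFinset_card_of_nodup hl, ← Finset.card_union_of_disjoint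
    (Finset.disjoint_left.mpr fun x hx hxs => hs x hxs (mem_toFinset.mp hx))]
  simpa using Finset.card_le_univ (l.toFinset ∪ s)

theorem le_ulam_of_forall_sublist {d : ℕ}
    (h : ∀ l, l <+ ofFn π → l <+ ofFn σ → l.length + d ≤ n) : d ≤ ulam n π σ := by
  have hd := h [] (nil_sublist _) (nil_sublist _)
  have hlcs := lcsLen_le (k := n - d) fun l hπ hσ => by have := h l hπ hσ; omega
  unfold ulam
  omega

theorem ulam_le_sub_length (hπ : l <+ ofFn π) (hσ : l <+ ofFn σ) : ulam n π σ ≤ n - l.length :=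
  Nat.sub_le_sub_left (length_le_lcsLen hπ hσ) n

end PermSublist

section RankBlocks

variable {n r : ℕ} {π σ : Equiv.Perm (Fin n)} {l : List (Fin n)}

theorem mp_lt (hdvd : r ∣ n) (j : Fin n) : mp n r π j < n / r :=
  Nat.div_lt_div_of_lt_of_dvd hdvd (π.symm j).isLt

theorem le_card_part (hr : 0 < r) (hdvd : r ∣ n) {i : ℕ} (hi : i < n / r) :
    r ≤ (part n r π i).card := by
  have hblock : i * r + r ≤ n := by
    simpa [add_mul, Nat.div_mul_cancel hdvd] using Nat.mul_le_mul_right r hi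
  have hdiv : ∀ s : Fin r, (i * r + s) / r = i := fun s => by
    rw [add_comm, Nat.add_mul_div_right _ _ hr, Nat.div_eq_of_lt s.isLt, zero_add]
  calc r = (Finset.univ : Finset (Fin r)).card := by simp
    _ ≤ (part n r π i).card := by
      refine Finset.card_le_card_of_injOn (fun s => π ⟨i * r + s, by omega⟩) ?_ ?_
      · intro s _
        simp only [Finset.mem_coe, part, Finset.mem_filter, Finset.mem_univ, true_and]
        simpa [mp] using hdiv s
      · intro s _ t _ hst
        have := congrArg Fin.val (π.injective hst)
        exact Fin.ext (by simpa using this)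

theorem mp_le_mp_of_mem_of_sublist (hπ : l <+ ofFn π) (hσ : l <+ ofFn σ) {x y : Fin n}
    (hx : x ∈ l) (hy : y ∈ l) (h : mp n r π x < mp n r π y) : mp n r σ x ≤ mp n r σ y :=
  Nat.div_le_div_right (symm_lt_symm_of_mem_of_sublist hπ hσ hx hy (Nat.lt_of_div_lt_div h)).le

/-- If `x` were moved from the odd block `2a+1` to a later block, an element of `l` in the even
block `2a+2` would follow `x` in `π` but precede it in `σ` (and symmetrically). -/
theorem mp_eq_of_forall_exists_mem (hdvd : r ∣ n)
    (hagree : ∀ x, Even (mp n r π x) ∨ Even (mp n r σ x) → mp n r π x = mp n r σ x)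
    (hπ : l <+ ofFn π) (hσ : l <+ ofFn σ) (hhit : ∀ i < n / r, ∃ e ∈ l, mp n r π e = i)
    {x : Fin n} (hx : x ∈ l) : mp n r π x = mp n r σ x := by
  by_contra hne
  have hπx : ¬ Even (mp n r π x) := fun h => hne (hagree x (Or.inl h))
  have hσx : ¬ Even (mp n r σ x) := fun h => hne (hagree x (Or.inr h))
  simp only [Nat.not_even_iff_odd, Nat.odd_iff] at hπx hσx
  rcases Nat.lt_or_gt_of_ne hne with hlt | hgt
  · obtain ⟨e, he, hπe⟩ := hhit (mp n r π x + 1) (by have := mp_lt (π := σ) hdvd x; omega)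
    have hσe := hagree e (Or.inl (by rw [hπe, Nat.even_iff]; omega))
    have := mp_le_mp_of_mem_of_sublist (r := r) hπ hσ hx he (by omega)
    omega
  · obtain ⟨e, he, hπe⟩ := hhit (mp n r σ x + 1) (by have := mp_lt (π := π) hdvd x; omega)
    have hσe := hagree e (Or.inl (by rw [hπe, Nat.even_iff]; omega))
    have := mp_le_mp_of_mem_of_sublist (r := r) hπ hσ he hx (by omega)
    omega

theorem length_add_le_of_agree_on_even (hr : 0 < r) (hdvd : r ∣ n) {d : ℕ} (hdr : d ≤ r)
    (hd : d ≤ hammR n r π σ)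
    (hagree : ∀ x, Even (mp n r π x) ∨ Even (mp n r σ x) → mp n r π x = mp n r σ x)
    (hπ : l <+ ofFn π) (hσ : l <+ ofFn σ) : l.length + d ≤ n := by
  have hl : l.Nodup := hπ.nodup (nodup_ofFn.mpr π.injective)
  by_cases hhit : ∀ i < n / r, ∃ e ∈ l, mp n r π e = i
  · have := length_add_card_le hl (s := Finset.univ.filter fun j => mp n r π j ≠ mp n r σ j)
      fun x hx hxl => (Finset.mem_filter.mp hx).2
        (mp_eq_of_forall_exists_mem hdvd hagree hπ hσ hhit hxl)
    unfold hammR at hd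
    omega
  · push Not at hhit
    obtain ⟨i, hi, hmiss⟩ := hhit
    have := length_add_card_le hl (s := part n r π i)
      fun x hx hxl => hmiss x hxl (Finset.mem_filter.mp hx).2
    have := le_card_part (π := π) hr hdvd hi
    omega

end RankBlocks

section Restriction

/-- The `i`-th position, in increasing order, among the positions lying in even rank blocks. -/
def evenBlockPos (r i : ℕ) : ℕ := i + i / r * r

def evenBlockIdx (r p : ℕ) : ℕ := p - p / r / 2 * r

theorem evenBlockPos_strictMono (r : ℕ) : StrictMono (evenBlockPos r) := fun _ _ h =>
  add_lt_add_of_lt_of_le h (Nat.mul_le_mul_right r (Nat.div_le_div_right h.le))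

theorem evenBlockPos_div (r i : ℕ) : evenBlockPos r i / r = 2 * (i / r) := by
  rcases r.eq_zero_or_pos with rfl | hr
  · simp
  · rw [evenBlockPos, Nat.add_mul_div_right _ _ hr, two_mul]

theorem evenBlockPos_of_dvd {r m : ℕ} (h : r ∣ m) : evenBlockPos r m = m + m := by
  rw [evenBlockPos, Nat.div_mul_cancel h]

theorem evenBlockPos_evenBlockIdx {r p : ℕ} (h : Even (p / r)) :
    evenBlockPos r (evenBlockIdx r p) = p := by
  obtain ⟨k, hk⟩ := h
  have hk2 : p / r / 2 = k := by omega
  have hkr : k * r ≤ p := (Nat.mul_le_mul_right r (by omega)).trans (Nat.div_mul_le_self p r)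
  have hdiv : (p - k * r) / r = k := by rw [mul_comm, Nat.sub_mul_div, hk]; omega
  rw [evenBlockIdx, evenBlockPos, hk2, hdiv]
  omega

variable {m n r : ℕ}

theorem exists_perm_restrict (hrm : r ∣ m) (hmn : m + m = n) (π : Equiv.Perm (Fin n))
    (e : Fin m ↪ Fin n) (heven : ∀ v, Even (mp n r π (e v))) :
    ∃ ρ : Equiv.Perm (Fin m), (∀ v, mp n r π (e v) = 2 * mp m r ρ v) ∧
      ∀ v w, ρ.symm v < ρ.symm w ↔ π.symm (e v) < π.symm (e w) := by
  have hpos (v) : evenBlockPos r (evenBlockIdx r (π.symm (e v))) = π.symm (e v) :=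
    evenBlockPos_evenBlockIdx (heven v)
  have hlt (v) : evenBlockIdx r (π.symm (e v)) < m := by
    rw [← (evenBlockPos_strictMono r).lt_iff_lt, hpos, evenBlockPos_of_dvd hrm, hmn]
    exact (π.symm (e v)).isLt
  let g : Fin m → Fin m := fun v => ⟨_, hlt v⟩
  have hg (v) : evenBlockPos r (g v) = π.symm (e v) := hpos v
  have hinj : Function.Injective g := fun v w h =>
    e.injective (π.symm.injective (Fin.ext (by rw [← hg, ← hg, h])))
  refine ⟨(Equiv.ofBijective g (Finite.injective_iff_bijective.mp hinj)).symm, fun v => ?_,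
    fun v w => ?_⟩
  · simp only [mp, Equiv.symm_symm, Equiv.ofBijective_apply]
    rw [← hg, evenBlockPos_div]
  · simp only [Equiv.symm_symm, Equiv.ofBijective_apply]
    rw [Fin.lt_def, Fin.lt_def, ← hg, ← hg, (evenBlockPos_strictMono r).lt_iff_lt]

theorem length_add_ulam_le {π σ : Equiv.Perm (Fin n)} {ρ τ : Equiv.Perm (Fin m)}
    (e : Fin m ↪ Fin n) (hρ : ∀ v w, ρ.symm v < ρ.symm w ↔ π.symm (e v) < π.symm (e w))
    (hτ : ∀ v w, τ.symm v < τ.symm w ↔ σ.symm (e v) < σ.symm (e w)) {l : List (Fin n)}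
    (hπ : l <+ ofFn π) (hσ : l <+ ofFn σ) : l.length + ulam m ρ τ ≤ n := by
  classical
  set l' := (ofFn ρ).filter fun v => e v ∈ l
  have hmem (v) : v ∈ l' ↔ e v ∈ l := by
    simpa [l', mem_ofFn] using fun _ => ρ.surjective v
  have hρ' : l' <+ ofFn ρ := filter_sublist
  have hτ' : l' <+ ofFn τ := sublist_ofFn_iff_pairwise.mpr <|
    (sublist_ofFn_iff_pairwise.mp hρ').imp_of_mem fun hv hw h => (hτ _ _).mpr <|
      symm_lt_symm_of_mem_of_sublist hπ hσ ((hmem _).mp hv) ((hmem _).mp hw) ((hρ _ _).mp h)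
  have hcard : l'.length + (Finset.univ.filter fun v => e v ∉ l).card = m := by
    rw [← toFinset_card_of_nodup (hρ'.nodup (nodup_ofFn.mpr ρ.injective))]
    convert Finset.card_filter_add_card_filter_not (s := Finset.univ) (fun v => e v ∈ l)
    · ext v; simp [hmem]
    · simp
  have hmissed := length_add_card_le (hπ.nodup (nodup_ofFn.mpr π.injective))
    (s := (Finset.univ.filter fun v => e v ∉ l).map e) (by simp)
  rw [Finset.card_map] at hmissed
  have := ulam_le_sub_length hρ' hτ'
  omega

end Restriction

section RegularUlam

variable {n r d : ℕ} {π σ : Equiv.Perm (Fin n)}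

theorem le_ulamR_of_forall
    (h : ∀ π' σ', mp n r π' = mp n r π → mp n r σ' = mp n r σ → d ≤ ulam n π' σ') :
    d ≤ ulamR n r π σ :=
  le_csInf ⟨_, π, σ, rfl, rfl, rfl⟩ fun _ ⟨π', σ', hπ', hσ', hk⟩ => hk ▸ h π' σ' hπ' hσ'

theorem ulamR_le_ulam {π' σ' : Equiv.Perm (Fin n)} (hπ : mp n r π' = mp n r π)
    (hσ : mp n r σ' = mp n r σ) : ulamR n r π σ ≤ ulam n π' σ' :=
  Nat.sInf_le ⟨π', σ', hπ, hσ, rfl⟩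

end RegularUlam

section BlockCode

variable {n r : ℕ}

theorem dvd_half_of_even_div (hdvd : r ∣ n) (heven : Even (n / r)) : r ∣ n / 2 := by
  obtain ⟨k, hk⟩ := heven
  have hn : n = 2 * (k * r) := by rw [← Nat.div_mul_cancel hdvd, hk]; ring
  exact ⟨k, by rw [hn, Nat.mul_div_cancel_left _ two_pos, mul_comm]⟩

theorem forall_fin_of_halves (h2 : n / 2 + n / 2 = n) {P : Fin n → Prop}
    (hlow : ∀ v : Fin (n / 2), P ⟨v, by have := v.isLt; omega⟩)
    (hhigh : ∀ v : Fin (n / 2), P ⟨v + n / 2, by have := v.isLt; omega⟩) (x : Fin n) : P x := by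
  by_cases hx : (x : ℕ) < n / 2
  · exact hlow ⟨x, hx⟩
  · convert hhigh ⟨x - n / 2, by omega⟩
    simp only
    omega

theorem mem_blockCode_of_mp_eq {h2 : n / 2 + n / 2 = n} {C' C1 : Set (Equiv.Perm (Fin (n / 2)))}
    {π π' : Equiv.Perm (Fin n)} (h : mp n r π' = mp n r π) (hπ : π ∈ blockCode n r h2 C' C1) :
    π' ∈ blockCode n r h2 C' C1 := by
  simpa only [blockCode, Set.mem_ofPred_eq, h] using hπ

theorem le_ulam_of_mem_blockCode (hr : 0 < r) (hdvd : r ∣ n) (hrm : r ∣ n / 2)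
    (h2 : n / 2 + n / 2 = n) {d : ℕ} (hdr : d ≤ r) {C' C1 : Set (Equiv.Perm (Fin (n / 2)))}
    (hC' : ∀ π ∈ C', ∀ σ ∈ C',
      mp (n / 2) r π ≠ mp (n / 2) r σ → d ≤ ulamR (n / 2) r π σ)
    (hC1 : ∀ π ∈ C1, ∀ σ ∈ C1,
      mp (n / 2) r π ≠ mp (n / 2) r σ → d ≤ hammR (n / 2) r π σ)
    {π σ : Equiv.Perm (Fin n)} (hπ : π ∈ blockCode n r h2 C' C1)
    (hσ : σ ∈ blockCode n r h2 C' C1) (hne : mp n r π ≠ mp n r σ) : d ≤ ulam n π σ := by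
  obtain ⟨πP, hπP, π₁, hπ₁, hπe, hπo⟩ := hπ
  obtain ⟨σP, hσP, σ₁, hσ₁, hσe, hσo⟩ := hσ
  refine le_ulam_of_forall_sublist fun l hπl hσl => ?_
  by_cases hP : mp (n / 2) r πP = mp (n / 2) r σP
  · have hagree : ∀ x, Even (mp n r π x) ∨ Even (mp n r σ x) → mp n r π x = mp n r σ x :=
      forall_fin_of_halves h2 (fun v _ => by rw [hπe, hσe, hP])
        (fun v h => by simp [hπo, hσo, parity_simps] at h)
    have h₁ : mp (n / 2) r π₁ ≠ mp (n / 2) r σ₁ := fun h => hne <| funext <|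
      forall_fin_of_halves h2 (fun v => by rw [hπe, hσe, hP]) (fun v => by rw [hπo, hσo, h])
    have hham : hammR (n / 2) r π₁ σ₁ ≤ hammR n r π σ := by
      refine Finset.card_le_card_of_injOn (fun v => ⟨v + n / 2, by omega⟩) (fun v hv => ?_)
        (fun v _ w _ h => Fin.ext (by simpa using congrArg Fin.val h))
      simp only [Finset.coe_filter, Finset.mem_univ, true_and, Set.mem_ofPred_eq] at hv ⊢
      rw [hπo, hσo]
      omega
    exact length_add_le_of_agree_on_even hr hdvd hdr ((hC1 π₁ hπ₁ σ₁ hσ₁ h₁).trans hham)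
      hagree hπl hσl
  · let e := Fin.castLEEmb (Nat.div_le_self n 2)
    obtain ⟨ρ, hρmp, hρ⟩ := exists_perm_restrict hrm h2 π e fun v => (hπe v).symm ▸ even_two_mul _
    obtain ⟨τ, hτmp, hτ⟩ := exists_perm_restrict hrm h2 σ e fun v => (hσe v).symm ▸ even_two_mul _
    have hulam : d ≤ ulam (n / 2) ρ τ := (hC' πP hπP σP hσP hP).trans <| ulamR_le_ulam
      (funext fun v => Nat.eq_of_mul_eq_mul_left two_pos ((hρmp v).symm.trans (hπe v)))
      (funext fun v => Nat.eq_of_mul_eq_mul_left two_pos ((hτmp v).symm.trans (hσe v)))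
    have := length_add_ulam_le e hρ hτ hπl hσl
    omega

end BlockCode

theorem block_interleave_distance_general (n r d : ℕ) (hr : 0 < r)
    (hdvd : r ∣ n) (h2 : n / 2 + n / 2 = n) (heven : Even (n / r)) (hdr : d ≤ r)
    (C' C1 : Set (Equiv.Perm (Fin (n / 2))))
    (hC' : ∀ π ∈ C', ∀ σ ∈ C',
      mp (n / 2) r π ≠ mp (n / 2) r σ → d ≤ ulamR (n / 2) r π σ)
    (hC1 : ∀ π ∈ C1, ∀ σ ∈ C1,
      mp (n / 2) r π ≠ mp (n / 2) r σ → d ≤ hammR (n / 2) r π σ) :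
    ∀ π ∈ blockCode n r h2 C' C1, ∀ σ ∈ blockCode n r h2 C' C1,
      mp n r π ≠ mp n r σ → d ≤ ulamR n r π σ := by
  intro π hπ σ hσ hne
  refine le_ulamR_of_forall fun π' σ' hπ' hσ' => ?_
  exact le_ulam_of_mem_blockCode hr hdvd (dvd_half_of_even_div hdvd heven) h2 hdr hC' hC1
    (mem_blockCode_of_mp_eq hπ' hπ) (mem_blockCode_of_mp_eq hσ' hσ) (by rwa [hπ', hσ'])

/-- Hamming-to-Ulam construction: if `n/r` is even, `d ≤ r`, `C'` is a code of
permutations of the first half with minimum `r`-regular Ulam distance at least `d`,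
and `C1` is a code of permutations of the second half with minimum `r`-regular
Hamming distance at least `d`, then the block-interleaved code `C' ∘_r C1` has
minimum `r`-regular Ulam distance at least `d`. -/
theorem block_interleave_distance (n r d : ℕ) (hn : 0 < n) (hr : 0 < r)
    (hdvd : r ∣ n) (h2 : n / 2 + n / 2 = n) (heven : Even (n / r)) (hdr : d ≤ r)
    (C' C1 : Set (Equiv.Perm (Fin (n / 2))))
    (hC' : ∀ π ∈ C', ∀ σ ∈ C',
      mp (n / 2) r π ≠ mp (n / 2) r σ → d ≤ ulamR (n / 2) r π σ)
    (hC1 : ∀ π ∈ C1, ∀ σ ∈ C1,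
      mp (n / 2) r π ≠ mp (n / 2) r σ → d ≤ hammR (n / 2) r π σ) :
    ∀ π ∈ blockCode n r h2 C' C1, ∀ σ ∈ blockCode n r h2 C' C1,
      mp n r π ≠ mp n r σ → d ≤ ulamR n r π σ :=
  block_interleave_distance_general n r d hr hdvd h2 heven hdr C' C1 hC' hC1
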